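/- For any nonzero integer a and any integer n ≥ 2, E_{2n,a} ≡ 2a^2 - a - 2a^3 n (mod 8), and E_{2n,a} ≡ a·(2a-1)^{-1} - 2n(2n-1)a^3 (mod 16), where (2a-1)^{-1} denotes the inverse of 2a-1 modulo 16. -/

import Mathlib

open Finset

def EZ (a : ℤ) : ℕ → ℤ
  | 0 => 1
  | n + 1 =>
      -a * ∑ k ∈ (Finset.Icc 1 ((n + 1) / 2)).attach,
        ((n + 1).choose (2 * k.1) : ℤ) * EZ a (n + 1 - 2 * k.1)
  decreasing_by
    have h := Finset.mem_Icc.mp k.2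
    omega

/-!
Only even indices enter the recursion: `E(2n) = -a ∑_{j<n} C(2n,2j) E(2j)`. Modulo 16 put
`g(j) = a (2a-1)³ - 2j(2j-1) a³`, where `(2a-1)³` is the inverse of `2a-1` since odd fourth powers
are `1` mod 16. The sums `∑ⱼ C(2n,2j) = 2^(2n-1)` and `∑ⱼ C(2n,2j) C(2j,2) = C(2n,2) 2^(2n-3)` give
`∑_{j ≤ n} C(2n,2j) g(j) ≡ 0` for `n ≥ 3`. Hence, by strong induction, every term with `2 ≤ j < n`
in the recursion may be replaced by `g(j)`, only `E(0) = 1` and `E(2) = -a` remain, and the step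
becomes a polynomial identity in `a` and `n` over `ZMod 16`. The congruence mod 8 is its reduction.
-/

theorem Finset.sum_range_two_mul {M : Type*} [AddCommMonoid M] (f : ℕ → M) (n : ℕ) :
    ∑ i ∈ range (2 * n), f i = ∑ j ∈ range n, (f (2 * j) + f (2 * j + 1)) := by
  induction n with
  | zero => simp
  | succ n ih => rw [Nat.mul_succ, sum_range_succ, sum_range_succ, add_assoc, ih, sum_range_succ]

theorem Nat.sum_range_choose_two_mul {n : ℕ} (hn : n ≠ 0) :
    ∑ j ∈ range (n + 1), (2 * n).choose (2 * j) = 2 ^ (2 * n - 1) := by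
  have hweighted : ∑ i ∈ range (2 * (n + 1)), ((2 * n).choose i : ℤ) * (1 + (-1) ^ i)
      = 2 ^ (2 * n) := by
    rw [show 2 * (n + 1) = 2 * n + 1 + 1 by ring, sum_range_succ, Nat.choose_succ_self,
      Nat.cast_zero, zero_mul, add_zero]
    simp only [mul_add, mul_one, sum_add_distrib, mul_comm _ ((-1 : ℤ) ^ _),
      Int.alternating_sum_range_choose_of_ne (by omega : 2 * n ≠ 0), add_zero]
    exact_mod_cast Nat.sum_range_choose (2 * n)
  have hpair : ∀ j, ((2 * n).choose (2 * j) : ℤ) * (1 + (-1) ^ (2 * j))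
      + ((2 * n).choose (2 * j + 1) : ℤ) * (1 + (-1) ^ (2 * j + 1))
      = 2 * (2 * n).choose (2 * j) := fun j => by
    rw [pow_succ, pow_mul, neg_one_sq, one_pow]
    ring
  have hpow : (2 : ℤ) ^ (2 * n) = 2 * 2 ^ (2 * n - 1) := by
    rw [← _root_.pow_succ']
    congr 1
    omega
  rw [sum_range_two_mul, sum_congr rfl fun j _ => hpair j, ← mul_sum, hpow,
    mul_right_inj' two_ne_zero] at hweighted
  exact_mod_cast hweighted

theorem Nat.sum_range_choose_two_mul_mul_choose_two (n : ℕ) :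
    ∑ j ∈ range (n + 1), (2 * n).choose (2 * j) * (2 * j).choose 2
      = (2 * n).choose 2 * ∑ j ∈ range n, (2 * n - 2).choose (2 * j) := by
  rw [sum_range_succ', mul_sum, Nat.mul_zero, Nat.choose_zero_succ, Nat.mul_zero, add_zero]
  refine sum_congr rfl fun j _ => ?_
  rw [Nat.choose_mul (by omega)]
  congr 2

theorem Nat.cast_choose_two_mul_two {R : Type*} [CommRing R] (j : ℕ) :
    ((2 * j).choose 2 : R) = j * (2 * j - 1) := by
  induction j with
  | zero => simp
  | succ j ih =>
    rw [show 2 * (j + 1) = 2 * j + 1 + 1 by ring, Nat.choose_succ_succ' (2 * j + 1) 1,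
      Nat.choose_succ_succ' (2 * j) 1]
    push_cast [ih, Nat.choose_one_right]
    ring

theorem ZMod.eq_pow_three_of_two_mul_sub_one_mul_eq_one {x y : ZMod 16}
    (h : (2 * x - 1) * y = 1) : y = (2 * x - 1) ^ 3 := by
  have hfour : ∀ z : ZMod 16, (2 * z - 1) ^ 4 = 1 := by decide
  linear_combination (2 * x - 1) ^ 3 * h - y * hfour x

theorem EZ_zero (a : ℤ) : EZ a 0 = 1 := by
  rw [EZ]

theorem EZ_succ (a : ℤ) (m : ℕ) :
    EZ a (m + 1) = -a * ∑ k ∈ Icc 1 ((m + 1) / 2),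
      ((m + 1).choose (2 * k) : ℤ) * EZ a (m + 1 - 2 * k) := by
  rw [EZ, sum_attach _ fun k => ((m + 1).choose (2 * k) : ℤ) * EZ a (m + 1 - 2 * k)]

theorem EZ_two_mul (a : ℤ) {n : ℕ} (hn : n ≠ 0) :
    EZ a (2 * n) = -a * ∑ j ∈ range n, ((2 * n).choose (2 * j) : ℤ) * EZ a (2 * j) := by
  obtain ⟨m, hm⟩ : ∃ m, 2 * n = m + 1 := ⟨2 * n - 1, by omega⟩
  rw [hm, EZ_succ, show (m + 1) / 2 = n by omega, ← hm]
  congr 1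
  refine sum_nbij' (n - ·) (n - ·) ?_ ?_ ?_ ?_ ?_ <;> intro k hk <;>
    simp only [mem_Icc, mem_range] at hk ⊢
  all_goals try omega
  rw [show 2 * n - 2 * k = 2 * (n - k) by omega, ← Nat.choose_symm (by omega : 2 * k ≤ 2 * n),
    show 2 * n - 2 * k = 2 * (n - k) by omega]

theorem EZ_two (a : ℤ) : EZ a 2 = -a := by
  simpa [EZ_zero] using EZ_two_mul a one_ne_zero

theorem EZ_four (a : ℤ) : EZ a 4 = 6 * a ^ 2 - a := by
  have hchoose : (2 * 2).choose (2 * 1) = 6 := rfl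
  rw [EZ_two_mul a (n := 2) two_ne_zero, sum_range_succ, sum_range_one, EZ_zero, EZ_two, hchoose,
    Nat.mul_zero, Nat.choose_zero_right]
  push_cast
  ring

def EZmod16 (a j : ZMod 16) : ZMod 16 := a * (2 * a - 1) ^ 3 - 2 * j * (2 * j - 1) * a ^ 3

theorem sum_choose_mul_EZmod16 (a : ZMod 16) {n : ℕ} (hn : 3 ≤ n) :
    ∑ j ∈ range (n + 1), ((2 * n).choose (2 * j) : ZMod 16) * EZmod16 a j = 0 := by
  obtain ⟨m, rfl⟩ : ∃ m, n = m + 3 := ⟨n - 3, by omega⟩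
  have hterm : ∀ j : ℕ, ((2 * (m + 3)).choose (2 * j) : ZMod 16) * EZmod16 a j
      = ((2 * (m + 3)).choose (2 * j) : ZMod 16) * (a * (2 * a - 1) ^ 3)
        - 2 * (((2 * (m + 3)).choose (2 * j) * (2 * j).choose 2 : ℕ) : ZMod 16) * a ^ 3 := by
    intro j
    push_cast [EZmod16, Nat.cast_choose_two_mul_two]
    ring
  have hS2 := Nat.sum_range_choose_two_mul_mul_choose_two (m + 3)
  rw [show 2 * (m + 3) - 2 = 2 * (m + 2) by omega, Nat.sum_range_choose_two_mul (by omega)] at hS2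
  rw [sum_congr rfl fun j _ => hterm j, sum_sub_distrib, ← sum_mul, ← sum_mul, ← mul_sum,
    ← Nat.cast_sum, ← Nat.cast_sum, Nat.sum_range_choose_two_mul (by omega), hS2]
  have h2pow : ∀ k, 4 ≤ k → (2 : ZMod 16) ^ k = 0 := fun k hk => pow_eq_zero_of_le hk (by decide)
  have h2pow' : (2 : ZMod 16) * 2 ^ (2 * (m + 2) - 1) = 0 := by
    rw [← pow_succ']
    exact h2pow _ (by omega)
  push_cast
  rw [h2pow _ (by omega)]
  linear_combination -(((2 * (m + 3)).choose 2 : ℕ) : ZMod 16) * a ^ 3 * h2pow'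

theorem neg_mul_sum_choose_mul_eq_EZmod16 (a : ZMod 16) {n : ℕ} (hn : 3 ≤ n) {f : ℕ → ZMod 16}
    (h0 : f 0 = 1) (h1 : f 1 = -a) (hf : ∀ j ∈ Ico 2 n, f j = EZmod16 a j) :
    -a * ∑ j ∈ range n, ((2 * n).choose (2 * j) : ZMod 16) * f j = EZmod16 a n := by
  have hsum := sum_choose_mul_EZmod16 a hn
  rw [sum_range_succ, ← sum_range_add_sum_Ico _ (by omega : 2 ≤ n)] at hsum
  have hIco : ∑ j ∈ Ico 2 n, ((2 * n).choose (2 * j) : ZMod 16) * f j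
      = -(∑ j ∈ range 2, ((2 * n).choose (2 * j) : ZMod 16) * EZmod16 a j)
        - ((2 * n).choose (2 * n) : ZMod 16) * EZmod16 a n := by
    rw [sum_congr rfl fun j hj => by rw [hf j hj]]
    linear_combination hsum
  rw [← sum_range_add_sum_Ico _ (by omega : 2 ≤ n), hIco]
  simp only [sum_range_succ, sum_range_zero, Nat.mul_zero, Nat.mul_one, Nat.choose_zero_right,
    Nat.choose_self, Nat.cast_one, Nat.cast_zero, h0, h1, Nat.cast_choose_two_mul_two]
  have key : ∀ A x : ZMod 16, -A * (1 - x * (2 * x - 1) * A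
      - (EZmod16 A 0 + x * (2 * x - 1) * EZmod16 A 1 + EZmod16 A x)) = EZmod16 A x := by
    decide
  linear_combination key a n

theorem cast_EZ_two_mul (a : ℤ) {n : ℕ} (hn : 2 ≤ n) :
    (EZ a (2 * n) : ZMod 16) = EZmod16 a n := by
  induction n using Nat.strong_induction_on with
  | _ n ih =>
  obtain rfl | hn3 := hn.eq_or_lt
  · have h : ∀ A : ZMod 16, 6 * A ^ 2 - A = EZmod16 A 2 := by decide
    push_cast [EZ_four]
    exact h _
  rw [EZ_two_mul a (by omega)]
  push_cast
  exact neg_mul_sum_choose_mul_eq_EZmod16 (a : ZMod 16) hn3 (by simp [EZ_zero])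
    (by simp [EZ_two]) fun j hj => ih j (mem_Ico.1 hj).2 (mem_Ico.1 hj).1

theorem stmt16_general (a : ℤ) (n : ℕ) (hn : 2 ≤ n) :
    EZ a (2 * n) ≡ 2 * a ^ 2 - a - 2 * a ^ 3 * n [ZMOD 8] ∧
    ∀ b : ℤ, (2 * a - 1) * b ≡ 1 [ZMOD 16] →
      EZ a (2 * n) ≡ a * b - 2 * n * (2 * n - 1) * a ^ 3 [ZMOD 16] := by
  have h16 : EZ a (2 * n) ≡ a * (2 * a - 1) ^ 3 - 2 * n * (2 * n - 1) * a ^ 3 [ZMOD 16] := by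
    refine (ZMod.intCast_eq_intCast_iff _ _ 16).mp ?_
    push_cast [cast_EZ_two_mul a hn, EZmod16]
    ring
  refine ⟨(h16.of_dvd (by norm_num)).trans ?_, fun b hb => h16.trans ?_⟩
  · have h : ∀ A x : ZMod 8,
        A * (2 * A - 1) ^ 3 - 2 * x * (2 * x - 1) * A ^ 3 = 2 * A ^ 2 - A - 2 * A ^ 3 * x := by
      decide
    refine (ZMod.intCast_eq_intCast_iff _ _ 8).mp ?_
    push_cast
    exact h _ _
  · replace hb := (ZMod.intCast_eq_intCast_iff _ _ 16).mpr hb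
    refine (ZMod.intCast_eq_intCast_iff _ _ 16).mp ?_
    push_cast at hb ⊢
    rw [ZMod.eq_pow_three_of_two_mul_sub_one_mul_eq_one hb]

theorem stmt16 (a : ℤ) (ha : a ≠ 0) (n : ℕ) (hn : 2 ≤ n) :
    EZ a (2 * n) ≡ 2 * a ^ 2 - a - 2 * a ^ 3 * n [ZMOD 8] ∧
    ∀ b : ℤ, (2 * a - 1) * b ≡ 1 [ZMOD 16] →
      EZ a (2 * n) ≡ a * b - 2 * n * (2 * n - 1) * a ^ 3 [ZMOD 16] :=
  stmt16_general a n hn
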